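/- Let S be a positive face structure, α ∈ S_{n+2}, and y ∈ δδ(α). Then there is a unique upper path from y to γγ(α) all of whose faces lie in δ(α), i.e. a unique sequence a₀, …, a_m ∈ δ(α) with y ∈ δ(a₀), γ(a_m) = γγ(α), and γ(a_{i−1}) ∈ δ(a_i) for 1 ≤ i ≤ m. -/

import Mathlib

/-- A pre-hypergraph: dimension-indexed finite sets of faces together with
codomain functions `gam k : S_{k+1} → S_k` and domain assignments
`del k : S_{k+1} → Finset S_k`. -/
structure PreHG where
  faces : ℕ → Finset ℕ
  gam : ℕ → ℕ → ℕ
  del : ℕ → ℕ → Finset ℕ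

namespace PreHG

/-- δ extended to sets of faces. -/
def delS (S : PreHG) (k : ℕ) (A : Finset ℕ) : Finset ℕ := A.biUnion (S.del k)

/-- γ extended to sets of faces. -/
def gamS (S : PreHG) (k : ℕ) (A : Finset ℕ) : Finset ℕ := A.image (S.gam k)

/-- The set `ι(a) = δδ(a) ∩ γδ(a)` of internal faces of a face `a` of dimension `k+2`
(the result lives in dimension `k`). -/
def iota (S : PreHG) (k : ℕ) (a : ℕ) : Finset ℕ :=
  S.delS k (S.del (k+1) a) ∩ S.gamS k (S.del (k+1) a)

/-- One step of the upper order: `a ⊲⁺ b` on faces of dimension `k`: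
there is `α` of dimension `k+1` with `a ∈ δ(α)` and `γ(α) = b`. -/
def ltPlusOne (S : PreHG) (k : ℕ) (a b : ℕ) : Prop :=
  ∃ α ∈ S.faces (k+1), a ∈ S.del k α ∧ S.gam k α = b

/-- The upper order `<⁺` on faces of dimension `k` (transitive closure of `⊲⁺`). -/
def ltPlus (S : PreHG) (k : ℕ) : ℕ → ℕ → Prop :=
  Relation.TransGen (S.ltPlusOne k)

/-- One step of the lower order: `a ⊲⁻ b` iff `γ(a) ∈ δ(b)`, on faces of dimension `k`
(the empty relation in dimension 0). -/
def ltMinusOne (S : PreHG) : ℕ → ℕ → ℕ → Prop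
  | 0, _, _ => False
  | (k+1), a, b => a ∈ S.faces (k+1) ∧ b ∈ S.faces (k+1) ∧ S.gam k a ∈ S.del k b

/-- The lower order `<⁻` on faces of dimension `k` (transitive closure of `⊲⁻`). -/
def ltMinus (S : PreHG) (k : ℕ) : ℕ → ℕ → Prop :=
  Relation.TransGen (S.ltMinusOne k)

/-- Comparability in the upper order. -/
def perpPlus (S : PreHG) (k : ℕ) (a b : ℕ) : Prop := S.ltPlus k a b ∨ S.ltPlus k b a

/-- Comparability in the lower order. -/
def perpMinus (S : PreHG) (k : ℕ) (a b : ℕ) : Prop := S.ltMinus k a b ∨ S.ltMinus k b a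

/-- Iterated codomain `γ^{(l)}`: maps a face of dimension `l+m` down to dimension `l`. -/
def gDown (S : PreHG) (l : ℕ) : ℕ → ℕ → ℕ
  | 0, a => a
  | (m+1), a => gDown S l m (S.gam (l+m) a)

/-- The axioms of a positive hypergraph. -/
def IsHG (S : PreHG) : Prop :=
  (∀ k a, a ∈ S.faces (k+1) → S.gam k a ∈ S.faces k) ∧
  (∀ k a, a ∈ S.faces (k+1) → S.del k a ⊆ S.faces k) ∧
  (∀ k a, a ∈ S.faces (k+1) → (S.del k a).Nonempty) ∧
  (∀ a ∈ S.faces 1, (S.del 0 a).card = 1) ∧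
  (∃ N, ∀ k, N ≤ k → S.faces k = ∅)

/-- Globularity: for faces of dimension ≥ 2,
`{γγ(a)} = γδ(a) − δδ(a)` and `δγ(a) = δδ(a) − γδ(a)`. -/
def Globular (S : PreHG) : Prop :=
  ∀ k a, a ∈ S.faces (k+2) →
    ({S.gam k (S.gam (k+1) a)} : Finset ℕ)
        = S.gamS k (S.del (k+1) a) \ S.delS k (S.del (k+1) a) ∧
      S.del k (S.gam (k+1) a)
        = S.delS k (S.del (k+1) a) \ S.gamS k (S.del (k+1) a)

/-- Strictness: `<⁺` is irreflexive in every dimension. -/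
def StrictPlus (S : PreHG) : Prop := ∀ k, ∀ a ∈ S.faces k, ¬ S.ltPlus k a a

/-- `<⁺` is linear in dimension 0. -/
def LinearZero (S : PreHG) : Prop :=
  ∀ a ∈ S.faces 0, ∀ b ∈ S.faces 0, a = b ∨ S.ltPlus 0 a b ∨ S.ltPlus 0 b a

/-- Disjointness: no two faces of positive dimension are comparable in both orders. -/
def Disjointness (S : PreHG) : Prop :=
  ∀ k a b, a ∈ S.faces (k+1) → b ∈ S.faces (k+1) →
    ¬ (S.perpPlus (k+1) a b ∧ S.perpMinus (k+1) a b)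

/-- Pencil linearity: γ-fibers and δ-fibers are linearly ordered by `<⁺`. -/
def Pencil (S : PreHG) : Prop :=
  ∀ k x,
    (∀ a b, a ∈ S.faces (k+1) → b ∈ S.faces (k+1) →
      S.gam k a = x → S.gam k b = x → a = b ∨ S.perpPlus (k+1) a b) ∧
    (∀ a b, a ∈ S.faces (k+1) → b ∈ S.faces (k+1) →
      x ∈ S.del k a → x ∈ S.del k b → a = b ∨ S.perpPlus (k+1) a b)

/-- A positive face structure: a nonempty positive hypergraph satisfying
globularity, strictness, disjointness and pencil linearity. -/
def IsPFS (S : PreHG) : Prop :=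
  S.IsHG ∧ (S.faces 0).Nonempty ∧ S.Globular ∧ S.StrictPlus ∧ S.LinearZero ∧
    S.Disjointness ∧ S.Pencil

end PreHG

/-- An upper path from `y` to `γγ(α)` all of whose faces lie in `δ(α)`,
for `α` a face of dimension `k+2`. -/
def PreHG.IsDeltaPath (S : PreHG) (k α y : ℕ) (L : List ℕ) : Prop :=
  (∀ a ∈ L, a ∈ S.del (k+1) α) ∧
  (∃ a₀, L.head? = some a₀ ∧ y ∈ S.del k a₀) ∧
  (∃ am, L.getLast? = some am ∧ S.gam k am = S.gam k (S.gam (k+1) α)) ∧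
  List.Chain' (fun a b => S.gam k a ∈ S.del k b) L

/-! Globularity says that the codomain of a face `a ∈ δ(α)` is either `γγ(α)` or again a face
of `δδ(α)`, while `γγ(α)` itself never lies in `δδ(α)`. Hence the path from `y` is forced:
at each face there is at most one `a ∈ δ(α)` containing it in its domain, because `δ(α)` is an
antichain for `<⁺` (a chain `a <⁺ b` with `b ∈ δ(α)` produces `β ∋ a` with `β <⁻ α`, which
pencil linearity at `a` and disjointness rule out), and following these faces terminates since
`<⁺` is a strict order and `δδ(α)` is finite. -/

namespace PreHG

variable {S : PreHG} {k : ℕ}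

lemma mem_faces_of_ltPlus (hHG : S.IsHG) {x z : ℕ} (h : S.ltPlus k x z) : z ∈ S.faces k := by
  obtain ⟨_, _, ⟨β, hβ, -, rfl⟩⟩ := Relation.TransGen.tail'_iff.1 h
  exact hHG.1 k β hβ

lemma isStrictOrder_ltPlus (hHG : S.IsHG) (hstrict : S.StrictPlus) :
    IsStrictOrder ℕ (S.ltPlus k) where
  irrefl x hx := hstrict k x (mem_faces_of_ltPlus hHG hx) hx
  trans _ _ _ := Relation.TransGen.trans

lemma ltPlus_gam_of_ltMinus {c d : ℕ} (h : S.ltMinus (k+1) c d) :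
    S.ltPlus k (S.gam k c) (S.gam k d) := by
  induction h with
  | single h => exact .single ⟨_, h.2.1, h.2.2, rfl⟩
  | tail _ h ih => exact ih.tail ⟨_, h.2.1, h.2.2, rfl⟩

lemma ltMinus_irrefl (hHG : S.IsHG) (hstrict : S.StrictPlus) {c : ℕ} (hc : c ∈ S.faces (k+1)) :
    ¬ S.ltMinus (k+1) c c :=
  fun h => hstrict k _ (hHG.1 k c hc) (ltPlus_gam_of_ltMinus h)

lemma exists_ltMinus_of_ltPlus {a b : ℕ} (h : S.ltPlus (k+1) a b) :
    ∀ α ∈ S.faces (k+2), b ∈ S.del (k+1) α →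
      ∃ β ∈ S.faces (k+2), a ∈ S.del (k+1) β ∧ S.ltMinus (k+2) β α := by
  induction h with
  | single h =>
    obtain ⟨β, hβ, ha, rfl⟩ := h
    exact fun α hα hb => ⟨β, hβ, ha, .single ⟨hβ, hα, hb⟩⟩
  | tail _ h ih =>
    obtain ⟨β', hβ', hc, rfl⟩ := h
    intro α hα hb
    obtain ⟨β, hβ, ha, hββ'⟩ := ih β' hβ' hc
    exact ⟨β, hβ, ha, hββ'.tail ⟨hβ', hα, hb⟩⟩

lemma not_ltPlus_of_mem_del (hHG : S.IsHG) (hstrict : S.StrictPlus) (hdisj : S.Disjointness)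
    (hpencil : S.Pencil) {α a b : ℕ} (hα : α ∈ S.faces (k+2)) (ha : a ∈ S.del (k+1) α)
    (hb : b ∈ S.del (k+1) α) :
    ¬ S.ltPlus (k+1) a b := by
  intro hab
  obtain ⟨β, hβ, haβ, hβα⟩ := exists_ltMinus_of_ltPlus hab α hα hb
  rcases (hpencil (k+1) a).2 β α hβ hα haβ ha with rfl | hperp
  · exact ltMinus_irrefl hHG hstrict hβ hβα
  · exact hdisj (k+1) β α hβ hα ⟨hperp, .inl hβα⟩

lemma eq_of_mem_del_of_mem_del (hHG : S.IsHG) (hstrict : S.StrictPlus)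
    (hdisj : S.Disjointness) (hpencil : S.Pencil) {α a b x : ℕ} (hα : α ∈ S.faces (k+2))
    (ha : a ∈ S.del (k+1) α) (hb : b ∈ S.del (k+1) α)
    (hxa : x ∈ S.del k a) (hxb : x ∈ S.del k b) : a = b := by
  have haS := hHG.2.1 (k+1) α hα ha
  have hbS := hHG.2.1 (k+1) α hα hb
  rcases (hpencil k x).2 a b haS hbS hxa hxb with h | h | h
  · exact h
  · exact absurd h (not_ltPlus_of_mem_del hHG hstrict hdisj hpencil hα ha hb)
  · exact absurd h (not_ltPlus_of_mem_del hHG hstrict hdisj hpencil hα hb ha)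

lemma gam_gam_not_mem_delS (hglob : S.Globular) {α : ℕ} (hα : α ∈ S.faces (k+2)) :
    S.gam k (S.gam (k+1) α) ∉ S.delS k (S.del (k+1) α) := by
  have h := Finset.mem_singleton_self (S.gam k (S.gam (k+1) α))
  rw [(hglob k α hα).1] at h
  exact (Finset.mem_sdiff.1 h).2

lemma gam_eq_or_mem_delS (hglob : S.Globular) {α a : ℕ} (hα : α ∈ S.faces (k+2))
    (ha : a ∈ S.del (k+1) α) :
    S.gam k a = S.gam k (S.gam (k+1) α) ∨ S.gam k a ∈ S.delS k (S.del (k+1) α) := by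
  refine or_iff_not_imp_right.2 fun h => ?_
  have hmem : S.gam k a ∈ S.gamS k (S.del (k+1) α) \ S.delS k (S.del (k+1) α) :=
    Finset.mem_sdiff.2 ⟨Finset.mem_image_of_mem _ ha, h⟩
  rwa [← (hglob k α hα).1, Finset.mem_singleton] at hmem

lemma not_isDeltaPath_nil {α x : ℕ} : ¬ S.IsDeltaPath k α x [] := by
  rintro ⟨-, ⟨_, h, -⟩, -⟩
  simp at h

lemma isDeltaPath_cons_iff {α x a : ℕ} {L : List ℕ} :
    S.IsDeltaPath k α x (a :: L) ↔
      a ∈ S.del (k+1) α ∧ x ∈ S.del k a ∧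
        (L = [] ∧ S.gam k a = S.gam k (S.gam (k+1) α) ∨ S.IsDeltaPath k α (S.gam k a) L) := by
  cases L with
  | nil => simp [IsDeltaPath, List.Chain']
  | cons c L =>
    simp only [IsDeltaPath, List.forall_mem_cons, List.head?_cons, Option.some.injEq,
      exists_eq_left', List.getLast?_cons_cons, List.Chain', List.isChain_cons_cons, reduceCtorEq,
      false_and, false_or]
    tauto

lemma IsDeltaPath.mem_delS {α x : ℕ} {L : List ℕ} (h : S.IsDeltaPath k α x L) :
    x ∈ S.delS k (S.del (k+1) α) := by
  obtain ⟨hL, ⟨a, ha, hxa⟩, -⟩ := h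
  exact Finset.mem_biUnion.2 ⟨a, hL a (List.mem_of_mem_head? ha), hxa⟩

lemma exists_isDeltaPath (hHG : S.IsHG) (hglob : S.Globular) (hstrict : S.StrictPlus)
    {α x : ℕ} (hα : α ∈ S.faces (k+2)) (hx : x ∈ S.delS k (S.del (k+1) α)) :
    ∃ L, S.IsDeltaPath k α x L := by
  have := isStrictOrder_ltPlus (k := k) hHG hstrict
  refine ((S.delS k (S.del (k+1) α)).finite_toSet.wellFoundedOn
    (r := Function.swap (S.ltPlus k))).induction hx
    (P := fun x => ∃ L, S.IsDeltaPath k α x L) fun x hx ih => ?_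
  obtain ⟨a, ha, hxa⟩ := Finset.mem_biUnion.1 hx
  have haS := hHG.2.1 (k+1) α hα ha
  rcases gam_eq_or_mem_delS hglob hα ha with hlast | hnext
  · exact ⟨[a], isDeltaPath_cons_iff.2 ⟨ha, hxa, .inl ⟨rfl, hlast⟩⟩⟩
  · obtain ⟨L, hL⟩ := ih _ hnext (.single ⟨a, haS, hxa, rfl⟩)
    exact ⟨a :: L, isDeltaPath_cons_iff.2 ⟨ha, hxa, .inr hL⟩⟩

lemma IsDeltaPath.eq (hHG : S.IsHG) (hglob : S.Globular) (hstrict : S.StrictPlus)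
    (hdisj : S.Disjointness) (hpencil : S.Pencil) {α : ℕ} (hα : α ∈ S.faces (k+2))
    {L M : List ℕ} {x : ℕ} (hL : S.IsDeltaPath k α x L) (hM : S.IsDeltaPath k α x M) :
    L = M := by
  induction L generalizing M x with
  | nil => exact absurd hL not_isDeltaPath_nil
  | cons a L ih =>
    obtain _ | ⟨b, M⟩ := M
    · exact absurd hM not_isDeltaPath_nil
    obtain ⟨ha, hxa, hLrest⟩ := isDeltaPath_cons_iff.1 hL
    obtain ⟨hb, hxb, hMrest⟩ := isDeltaPath_cons_iff.1 hM
    obtain rfl := eq_of_mem_del_of_mem_del hHG hstrict hdisj hpencil hα ha hb hxa hxb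
    have hend := gam_gam_not_mem_delS hglob hα
    rcases hLrest, hMrest with ⟨⟨rfl, hLend⟩ | hL', ⟨rfl, hMend⟩ | hM'⟩
    · rfl
    · exact absurd (hLend ▸ hM'.mem_delS) hend
    · exact absurd (hMend ▸ hL'.mem_delS) hend
    · rw [ih hL' hM']

end PreHG

/-- For `α ∈ S_{n+2}` and `y ∈ δδ(α)`, there is a unique upper
`δ(α)`-path from `y` to `γγ(α)`. -/
theorem stmt5 (S : PreHG) (hS : S.IsPFS) (k α y : ℕ)
    (hα : α ∈ S.faces (k+2)) (hy : y ∈ S.delS k (S.del (k+1) α)) :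
    ∃! L : List ℕ, S.IsDeltaPath k α y L := by
  obtain ⟨hHG, -, hglob, hstrict, -, hdisj, hpencil⟩ := hS
  obtain ⟨L, hL⟩ := PreHG.exists_isDeltaPath hHG hglob hstrict hα hy
  exact ⟨L, hL, fun M hM => hM.eq hHG hglob hstrict hdisj hpencil hα hL⟩
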